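/- Assume π̲ = 0 and 0 < 2 t_r < t_k. Define Φ(p) = (t_e / (1 − (t_r/t_k)(1 − F(p)))) · (∫_{0}^{p} x f(x) dx)/F(p). Then Φ is nondecreasing on the region {p ∈ (0, π̄] : F(p) > 0}: for all such p ≤ p', Φ(p) ≤ Φ(p'). (The proof uses that F is concave with F(0) = 0, so F(p) ≥ p f(p).) -/

import Mathlib

/-!
Write `D(p) = 1 - c (1 - F(p))` with `c = t_r / t_k < 1/2`, so that `Φ = t_e · I / (D F)` with
`I(p) = ∫_0^p x f`. Going from `p` to `p' ≥ p` adds mass `G = F(p') - F(p)` located at prices `≥ p`,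
so `I` grows by at least `p G`. Since `f` is nonincreasing, its truncated mean `I / F` is at most
`p / 2`, so this increment is at least twice the old mean times `G`; this beats the relative growth
of `D F`, which is `G (D + c F(p')) ≤ 2 D G` because `c < 1/2`.
-/

open Set MeasureTheory intervalIntegral

theorem integral_mul_le_midpoint_mul_integral {f : ℝ → ℝ} {a b : ℝ} (hab : a ≤ b)
    (hf : AntitoneOn f (Icc a b)) :
    ∫ x in a..b, x * f x ≤ (a + b) / 2 * ∫ x in a..b, f x := by
  set g : ℝ → ℝ := fun x => (x - (a + b) / 2) * f x with hg
  have hfi : IntervalIntegrable f volume a b := by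
    apply AntitoneOn.intervalIntegrable
    rwa [uIcc_of_le hab]
  have hgi : IntervalIntegrable g volume a b := hfi.continuousOn_mul (by fun_prop)
  have hgi' : IntervalIntegrable (fun x => g (a + b - x)) volume a b := by
    simpa using (hgi.comp_sub_left (a + b)).symm
  have hrefl : ∫ x in a..b, g (a + b - x) = ∫ x in a..b, g x := by
    simp [integral_comp_sub_left g (a + b)]
  -- pairing `x` with its mirror image `a + b - x` makes the integrand pointwise nonpositive
  have hpair : ∫ x in a..b, (g x + g (a + b - x)) ≤ 0 := by
    refine (integral_mono_on hab (hgi.add hgi') (intervalIntegrable_const (c := 0))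
      fun x hx => ?_).trans integral_zero.le
    have hx' : a + b - x ∈ Icc a b := ⟨by linarith [hx.2], by linarith [hx.1]⟩
    have key : (x - (a + b) / 2) * (f x - f (a + b - x)) ≤ 0 := by
      rcases le_total x ((a + b) / 2) with h | h
      · exact mul_nonpos_of_nonpos_of_nonneg (by linarith)
          (sub_nonneg.2 (hf hx hx' (by linarith)))
      · exact mul_nonpos_of_nonneg_of_nonpos (by linarith)
          (sub_nonpos.2 (hf hx' hx (by linarith)))
    simp only [hg]
    linarith
  have hdiff : (∫ x in a..b, x * f x) - (a + b) / 2 * ∫ x in a..b, f x = ∫ x in a..b, g x := by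
    rw [← intervalIntegral.integral_const_mul, ← integral_sub (hfi.continuousOn_mul (by fun_prop))
      (hfi.const_mul _)]
    simp only [hg, sub_mul]
  rw [integral_add hgi hgi', hrefl] at hpair
  linarith

theorem left_mul_integral_le_integral_mul {f : ℝ → ℝ} {a b : ℝ} (hab : a ≤ b)
    (hfi : IntervalIntegrable f volume a b) (hf : ∀ x ∈ Icc a b, 0 ≤ f x) :
    a * ∫ x in a..b, f x ≤ ∫ x in a..b, x * f x := by
  rw [← intervalIntegral.integral_const_mul]
  exact integral_mono_on hab (hfi.const_mul a) (hfi.continuousOn_mul (by fun_prop))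
    fun x hx => mul_le_mul_of_nonneg_right hx.1 (hf x hx)

theorem div_le_div_of_half_mean_bound {c F F' I I' p : ℝ} (hc0 : 0 ≤ c) (hc : c ≤ 1 / 2)
    (hF : 0 < F) (hFF' : F ≤ F') (hF'1 : F' ≤ 1) (hI0 : 0 ≤ I) (hIp : I ≤ p / 2 * F)
    (hI' : I + p * (F' - F) ≤ I') :
    I / ((1 - c * (1 - F)) * F) ≤ I' / ((1 - c * (1 - F')) * F') := by
  set D := 1 - c * (1 - F)
  set G := F' - F
  have hD : 1 / 2 ≤ D := by nlinarith
  have hG : 0 ≤ G := sub_nonneg.2 hFF'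
  have hDF' : (1 - c * (1 - F')) * F' = D * F + G * (D + c * F') := by ring
  have hcF' : D + c * F' ≤ 2 * D := by nlinarith
  have hD' : 0 < 1 - c * (1 - F') := by nlinarith
  have hDF : 0 < D * F := mul_pos (by linarith) hF
  rw [div_le_div_iff₀ hDF (mul_pos hD' (hF.trans_le hFF')), hDF']
  calc I * (D * F + G * (D + c * F'))
      ≤ I * (D * F) + p / 2 * F * (G * (2 * D)) := by
        rw [mul_add]
        gcongr I * (D * F) + ?_
        exact mul_le_mul hIp (mul_le_mul_of_nonneg_left hcF' hG)
          (mul_nonneg hG (by nlinarith)) (hI0.trans hIp)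
    _ = (I + p * G) * (D * F) := by ring
    _ ≤ I' * (D * F) := mul_le_mul_of_nonneg_right hI' hDF.le

theorem stmt_17
    (πhi : ℝ) (f F : ℝ → ℝ)
    (hcont : ContinuousOn f (Set.Icc 0 πhi))
    (hnn : ∀ x ∈ Set.Icc 0 πhi, 0 ≤ f x)
    (hanti : ∀ x ∈ Set.Icc 0 πhi, ∀ y ∈ Set.Icc 0 πhi, x ≤ y → f y ≤ f x)
    (hone : (∫ x in (0:ℝ)..πhi, f x) = 1)
    (hF : ∀ p, F p = ∫ x in (0:ℝ)..p, f x)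
    (tk te tr : ℝ) (htk : 0 < tk) (hte : 0 < te) (htr : 0 < tr) (h4 : 2 * tr < tk)
    (Φ : ℝ → ℝ)
    (hΦ : ∀ p, Φ p = (te / (1 - (tr / tk) * (1 - F p))) *
      ((∫ x in (0:ℝ)..p, x * f x) / F p))
    (p p' : ℝ) (hp0 : 0 < p) (hp'hi : p' ≤ πhi) (hpp' : p ≤ p')
    (hFp : 0 < F p) :
    Φ p ≤ Φ p' := by
  have hpπ : p ≤ πhi := hpp'.trans hp'hi
  have hint : ∀ a ∈ Icc 0 πhi, ∀ b ∈ Icc 0 πhi, IntervalIntegrable f volume a b :=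
    fun a ha b hb => (hcont.mono (uIcc_subset_Icc ha hb)).intervalIntegrable
  have h0p := hint 0 ⟨le_rfl, hp0.le.trans hpπ⟩ p ⟨hp0.le, hpπ⟩
  have hpp'i := hint p ⟨hp0.le, hpπ⟩ p' ⟨hp0.le.trans hpp', hp'hi⟩
  have hFmono : F p ≤ F p' := by
    rw [hF, hF, ← integral_add_adjacent_intervals h0p hpp'i, le_add_iff_nonneg_right]
    exact integral_nonneg hpp' fun x hx => hnn x ⟨hp0.le.trans hx.1, hx.2.trans hp'hi⟩
  have hF'1 : F p' ≤ 1 := by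
    rw [hF, ← hone]
    exact integral_mono_interval le_rfl (hp0.le.trans hpp') hp'hi
      (ae_restrict_of_forall_mem measurableSet_Ioc fun x hx => hnn x (Ioc_subset_Icc_self hx))
      (hint 0 ⟨le_rfl, hp0.le.trans hpπ⟩ πhi ⟨hp0.le.trans hpπ, le_rfl⟩)
  have hmean : (∫ x in (0:ℝ)..p, x * f x) ≤ p / 2 * F p := by
    have hf : AntitoneOn f (Icc 0 p) := fun x hx y hy hxy =>
      hanti x ⟨hx.1, hx.2.trans hpπ⟩ y ⟨hy.1, hy.2.trans hpπ⟩ hxy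
    simpa [hF] using integral_mul_le_midpoint_mul_integral hp0.le hf
  have hgrowth : (∫ x in (0:ℝ)..p, x * f x) + p * (F p' - F p) ≤ ∫ x in (0:ℝ)..p', x * f x := by
    rw [← integral_add_adjacent_intervals (h0p.continuousOn_mul (by fun_prop))
      (hpp'i.continuousOn_mul (by fun_prop)), hF, hF, ← integral_add_adjacent_intervals h0p hpp'i,
      add_sub_cancel_left, add_le_add_iff_left]
    exact left_mul_integral_le_integral_mul hpp' hpp'i
      fun x hx => hnn x ⟨hp0.le.trans hx.1, hx.2.trans hp'hi⟩
  have hI0 : 0 ≤ ∫ x in (0:ℝ)..p, x * f x :=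
    integral_nonneg hp0.le fun x hx => mul_nonneg hx.1 (hnn x ⟨hx.1, hx.2.trans hpπ⟩)
  have hc : tr / tk ≤ 1 / 2 := by rw [div_le_iff₀ htk]; linarith
  rw [hΦ, hΦ, div_mul_div_comm, div_mul_div_comm, mul_div_assoc, mul_div_assoc]
  exact mul_le_mul_of_nonneg_left (div_le_div_of_half_mean_bound (by positivity) hc hFp hFmono
    hF'1 hI0 hmean hgrowth) hte.le
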